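/- Let Θ ⊆ ℝ^d be a nonempty compact convex set, and let L : ℝ^d → ℝ and g : ℝ^d → ℝ be convex functions with {θ ∈ Θ : g(θ) ≤ 0} nonempty; set f* = inf{L(θ) : θ ∈ Θ, g(θ) ≤ 0} and define the dual function q(λ) = inf_{θ∈Θ} (L(θ) + λ·g(θ)) for λ ≥ 0. Let η₂ > 0, λ^(0) ≥ 0, and suppose L_g > 0 satisfies |g(θ)| ≤ L_g for all θ ∈ Θ. Generate primal iterates θ^(i) ∈ Θ such that θ^(i) minimizes L(θ) + λ^(i)·g(θ) over Θ, and dual iterates λ^(i+1) = max{λ^(i) + η₂·g(θ^(i)), 0}, and set θ̃^(m) = (1/m)·Σ_{i=0}^{m−1} θ^(i). Then for every m ≥ 1, L(θ̃^(m)) ≤ f* + (λ^(0))²/(2m·η₂) + η₂·L_g²/2. -/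

import Mathlib

/-!
Weak duality bounds each Lagrangian value `L θᵢ + λᵢ g θᵢ` by `f*`, while the dual update gives
`λᵢ₊₁² ≤ λᵢ² + 2η₂ λᵢ g θᵢ + η₂² g(θᵢ)²`. Combining the two, `L θᵢ ≤ f* + η₂ L_g²/2` up to the drop
`(λᵢ² - λᵢ₊₁²)/(2η₂)` of the potential `λ²/(2η₂)`; these drops telescope, and Jensen's inequality
passes the averaged bound to `L` at the averaged iterate.
-/

open Finset

theorem ConvexOn.map_inv_card_smul_sum_le {E ι : Type*} [AddCommGroup E] [Module ℝ E] {s : Set E}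
    {f : E → ℝ} (hf : ConvexOn ℝ s f) {t : Finset ι} (ht : t.Nonempty) {p : ι → E}
    (hp : ∀ i ∈ t, p i ∈ s) :
    f ((#t : ℝ)⁻¹ • ∑ i ∈ t, p i) ≤ (#t : ℝ)⁻¹ * ∑ i ∈ t, f (p i) := by
  have hcard : (#t : ℝ) ≠ 0 := by exact_mod_cast ht.card_pos.ne'
  have := hf.map_sum_le (w := fun _ => (#t : ℝ)⁻¹) (fun _ _ => by positivity)
    (by rw [sum_const, nsmul_eq_mul, mul_inv_cancel₀ hcard]) hp
  simpa only [smul_eq_mul, ← smul_sum, ← mul_sum] using this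

theorem inv_mul_sum_range_le_of_le_sub_succ {a V : ℕ → ℝ} {c : ℝ} {m : ℕ} (hm : 0 < m)
    (ha : ∀ i, a i ≤ V i - V (i + 1) + c) (hV : 0 ≤ V m) :
    (m : ℝ)⁻¹ * ∑ i ∈ range m, a i ≤ V 0 / m + c := by
  have hm' : (0 : ℝ) < m := by exact_mod_cast hm
  have hsum : ∑ i ∈ range m, a i ≤ V 0 - V m + m * c := by
    calc ∑ i ∈ range m, a i ≤ ∑ i ∈ range m, (V i - V (i + 1) + c) := sum_le_sum fun i _ => ha i
      _ = V 0 - V m + m * c := by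
        rw [sum_add_distrib, sum_range_sub', sum_const, card_range, nsmul_eq_mul]
  rw [inv_mul_le_iff₀ hm', mul_add, mul_div_cancel₀ _ hm'.ne']
  linarith

theorem lagrangian_le_sInf_feasible {α : Type*} {Θ : Set α} {L g : α → ℝ} {lam : ℝ} {θ : α}
    (hlam : 0 ≤ lam) (hfeas : {x | x ∈ Θ ∧ g x ≤ 0}.Nonempty)
    (hmin : ∀ x ∈ Θ, L θ + lam * g θ ≤ L x + lam * g x) :
    L θ + lam * g θ ≤ sInf (L '' {x | x ∈ Θ ∧ g x ≤ 0}) := by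
  refine le_csInf (hfeas.image L) ?_
  rintro _ ⟨x, ⟨hxΘ, hxg⟩, rfl⟩
  nlinarith [hmin x hxΘ]

theorem le_sub_sq_max_div_add_of_add_mul_le {ℓ lam c f η G : ℝ} (hη : 0 < η)
    (hlagr : ℓ + lam * c ≤ f) (hc : |c| ≤ G) :
    ℓ ≤ lam ^ 2 / (2 * η) - max (lam + η * c) 0 ^ 2 / (2 * η) + (f + η * G ^ 2 / 2) := by
  have hmax : max (lam + η * c) 0 ^ 2 ≤ (lam + η * c) ^ 2 := by
    rcases le_total (lam + η * c) 0 with h | h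
    · rw [max_eq_right h, zero_pow two_ne_zero]; positivity
    · rw [max_eq_left h]
  have hc2 : c ^ 2 ≤ G ^ 2 := by
    simpa only [sq_abs] using pow_le_pow_left₀ (abs_nonneg c) hc 2
  rw [← sub_div, div_add' _ _ _ (by positivity), le_div_iff₀ (by positivity)]
  nlinarith [mul_le_mul_of_nonneg_left hc2 (mul_pos hη hη).le]

theorem stmt5_general {d : ℕ} (Θ : Set (EuclideanSpace ℝ (Fin d)))
    (L g : EuclideanSpace ℝ (Fin d) → ℝ)
    (hL : ConvexOn ℝ Set.univ L)
    (hfeas : {x | x ∈ Θ ∧ g x ≤ 0}.Nonempty)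
    (fstar : ℝ) (hfstar : fstar = sInf (L '' {x | x ∈ Θ ∧ g x ≤ 0}))
    (η₂ : ℝ) (hη : 0 < η₂)
    (lam : ℕ → ℝ) (hlam0 : 0 ≤ lam 0)
    (Lg : ℝ) (hgbd : ∀ x ∈ Θ, |g x| ≤ Lg)
    (θ : ℕ → EuclideanSpace ℝ (Fin d)) (hθmem : ∀ i, θ i ∈ Θ)
    (hmin : ∀ i, ∀ x ∈ Θ, L (θ i) + lam i * g (θ i) ≤ L x + lam i * g x)
    (hdual : ∀ i, lam (i + 1) = max (lam i + η₂ * g (θ i)) 0)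
    (m : ℕ) (hm : 1 ≤ m) :
    L ((m : ℝ)⁻¹ • ∑ i ∈ Finset.range m, θ i) ≤
      fstar + (lam 0) ^ 2 / (2 * m * η₂) + η₂ * Lg ^ 2 / 2 := by
  have hnonneg : ∀ i, 0 ≤ lam i := by
    rintro (_ | i)
    exacts [hlam0, hdual i ▸ le_max_right _ _]
  have hstep : ∀ i, L (θ i) ≤
      lam i ^ 2 / (2 * η₂) - lam (i + 1) ^ 2 / (2 * η₂) + (fstar + η₂ * Lg ^ 2 / 2) := fun i => by
    rw [hdual i]
    exact le_sub_sq_max_div_add_of_add_mul_le hη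
      (hfstar ▸ lagrangian_le_sInf_feasible (hnonneg i) hfeas (hmin i)) (hgbd _ (hθmem i))
  have havg := inv_mul_sum_range_le_of_le_sub_succ (V := fun i => lam i ^ 2 / (2 * η₂)) hm hstep
    (by positivity)
  have hjensen := hL.map_inv_card_smul_sum_le (nonempty_range_iff.2 (Nat.one_le_iff_ne_zero.1 hm)) (p := θ)
    fun i _ => Set.mem_univ _
  rw [card_range] at hjensen
  calc L ((m : ℝ)⁻¹ • ∑ i ∈ range m, θ i) ≤ lam 0 ^ 2 / (2 * η₂) / m + (fstar + η₂ * Lg ^ 2 / 2) :=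
        hjensen.trans havg
    _ = fstar + lam 0 ^ 2 / (2 * m * η₂) + η₂ * Lg ^ 2 / 2 := by ring

/-- Statement 2 of Proposition 2: an upper bound on the primal cost of the
running averages, L(θ̃^(m)) ≤ f* + (λ^(0))²/(2mη₂) + η₂·L_g²/2. -/
theorem stmt5 {d : ℕ} (Θ : Set (EuclideanSpace ℝ (Fin d)))
    (hne : Θ.Nonempty) (hcomp : IsCompact Θ) (hconv : Convex ℝ Θ)
    (L g : EuclideanSpace ℝ (Fin d) → ℝ)
    (hL : ConvexOn ℝ Set.univ L) (hg : ConvexOn ℝ Set.univ g)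
    (hfeas : {x | x ∈ Θ ∧ g x ≤ 0}.Nonempty)
    (fstar : ℝ) (hfstar : fstar = sInf (L '' {x | x ∈ Θ ∧ g x ≤ 0}))
    (q : ℝ → ℝ)
    (hq : ∀ lam : ℝ, 0 ≤ lam → q lam = sInf ((fun x => L x + lam * g x) '' Θ))
    (η₂ : ℝ) (hη : 0 < η₂)
    (lam : ℕ → ℝ) (hlam0 : 0 ≤ lam 0)
    (Lg : ℝ) (hLg : 0 < Lg) (hgbd : ∀ x ∈ Θ, |g x| ≤ Lg)
    (θ : ℕ → EuclideanSpace ℝ (Fin d)) (hθmem : ∀ i, θ i ∈ Θ)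
    (hmin : ∀ i, ∀ x ∈ Θ, L (θ i) + lam i * g (θ i) ≤ L x + lam i * g x)
    (hdual : ∀ i, lam (i + 1) = max (lam i + η₂ * g (θ i)) 0)
    (m : ℕ) (hm : 1 ≤ m) :
    L ((m : ℝ)⁻¹ • ∑ i ∈ Finset.range m, θ i) ≤
      fstar + (lam 0) ^ 2 / (2 * m * η₂) + η₂ * Lg ^ 2 / 2 :=
  stmt5_general Θ L g hL hfeas fstar hfstar η₂ hη lam hlam0 Lg hgbd θ hθmem hmin hdual m hm
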